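/- Key inequality in majority decoding: for a collection of functions {f_S}_{S∈𝓢'} on subsets of [n] and g defined by pointwise majority g(x) = maj_{S∋x} f_S(x), one has E_{S₁,S₂∈𝓢'}[disagr(f_{S₁},f_{S₂})] ≥ (1/n)·(E_{S∈𝓢'}[disagr(g,f_S)])², where all expectations are over uniform independent draws from 𝓢'. -/

import Mathlib

open Finset

/-- The pointwise-majority function of a collection of local functions `f S : S → Bool`
(values of `f S` outside `S` are ignored); ties are broken towards `true`. -/
def majFun {n : ℕ} (S' : Finset (Finset (Fin n))) (f : Finset (Fin n) → Fin n → Bool)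
    (x : Fin n) : Bool :=
  decide ((S'.filter (fun S => x ∈ S ∧ f S x = false)).card
      ≤ (S'.filter (fun S => x ∈ S ∧ f S x = true)).card)

/-
Fix `x` and let `a x` be the number of `S ∋ x` with `f S x ≠ g x`, `b x` the number with
`f S x = g x`; majority gives `a x ≤ b x`. Every (minority, majority) pair disagrees at `x`,
so at least `a x * b x ≥ a x ^ 2` ordered pairs disagree at `x`. Summing over `x` and applying
Cauchy–Schwarz, `(∑ₓ a x)² ≤ n ∑ₓ a x² ≤ n · ∑_{S₁,S₂} disagr(f_{S₁}, f_{S₂})`, while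
`∑ₓ a x = ∑_S disagr(g, f_S)` by double counting.
-/

lemma sum_card_filter_eq_sum_card_filter_mem {ι β : Type*} [Fintype β] [DecidableEq β]
    (s : Finset ι) (T : ι → Finset β) (p : ι → β → Prop) [∀ i b, Decidable (p i b)] :
    ∑ i ∈ s, #{b ∈ T i | p i b} = ∑ b, #{i ∈ s | b ∈ T i ∧ p i b} := by
  convert sum_card_bipartiteAbove_eq_sum_card_bipartiteBelow (fun i b => b ∈ T i ∧ p i b)
    (s := s) (t := univ) using 2
  · congr 1
    ext
    simp [bipartiteAbove]
  · congr 1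

section Majority

variable {n : ℕ} (S' : Finset (Finset (Fin n))) (f : Finset (Fin n) → Fin n → Bool)

def disagreeCount (g : Fin n → Bool) (x : Fin n) : ℕ := #{S ∈ S' | x ∈ S ∧ f S x ≠ g x}

def agreeCount (g : Fin n → Bool) (x : Fin n) : ℕ := #{S ∈ S' | x ∈ S ∧ f S x = g x}

lemma sum_card_disagr_eq_sum_disagreeCount (g : Fin n → Bool) :
    ∑ S ∈ S', #{u ∈ S | g u ≠ f S u} = ∑ x, disagreeCount S' f g x := by
  simp_rw [ne_comm (a := g _)]
  exact sum_card_filter_eq_sum_card_filter_mem S' id (fun S u => f S u ≠ g u)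

lemma disagreeCount_majFun_le_agreeCount (x : Fin n) :
    disagreeCount S' f (majFun S' f) x ≤ agreeCount S' f (majFun S' f) x := by
  unfold disagreeCount agreeCount
  cases hg : majFun S' f x
  · have hlt : #{S ∈ S' | x ∈ S ∧ f S x = true} < #{S ∈ S' | x ∈ S ∧ f S x = false} := by
      simpa [majFun] using hg
    simpa only [ne_eq, Bool.not_eq_false] using hlt.le
  · have hle : #{S ∈ S' | x ∈ S ∧ f S x = false} ≤ #{S ∈ S' | x ∈ S ∧ f S x = true} := by
      simpa [majFun] using hg
    simpa only [ne_eq, Bool.not_eq_true] using hle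

lemma disagreeCount_mul_agreeCount_le (g : Fin n → Bool) (x : Fin n) :
    disagreeCount S' f g x * agreeCount S' f g x
      ≤ #{P ∈ S' ×ˢ S' | x ∈ P.1 ∩ P.2 ∧ f P.1 x ≠ f P.2 x} := by
  rw [disagreeCount, agreeCount, ← card_product]
  refine card_le_card fun P hP => ?_
  simp only [mem_product, mem_filter, mem_inter] at hP ⊢
  obtain ⟨⟨hS₁, hx₁, hne⟩, hS₂, hx₂, heq⟩ := hP
  exact ⟨⟨hS₁, hS₂⟩, ⟨hx₁, hx₂⟩, heq ▸ hne⟩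

lemma disagreeCount_majFun_sq_le (x : Fin n) :
    disagreeCount S' f (majFun S' f) x ^ 2
      ≤ #{P ∈ S' ×ˢ S' | x ∈ P.1 ∩ P.2 ∧ f P.1 x ≠ f P.2 x} :=
  calc _ ≤ disagreeCount S' f (majFun S' f) x * agreeCount S' f (majFun S' f) x := by
        rw [sq]
        gcongr
        exact disagreeCount_majFun_le_agreeCount S' f x
    _ ≤ _ := disagreeCount_mul_agreeCount_le S' f _ x

lemma sq_sum_card_disagr_majFun_le :
    (∑ S ∈ S', #{u ∈ S | majFun S' f u ≠ f S u}) ^ 2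
      ≤ n * ∑ P ∈ S' ×ˢ S', #{u ∈ P.1 ∩ P.2 | f P.1 u ≠ f P.2 u} := by
  rw [sum_card_disagr_eq_sum_disagreeCount,
    sum_card_filter_eq_sum_card_filter_mem (S' ×ˢ S') (fun P => P.1 ∩ P.2)
      (fun P u => f P.1 u ≠ f P.2 u)]
  calc (∑ x, disagreeCount S' f (majFun S' f) x) ^ 2
      ≤ #(univ : Finset (Fin n)) * ∑ x, disagreeCount S' f (majFun S' f) x ^ 2 :=
        sq_sum_le_card_mul_sum_sq
    _ ≤ n * ∑ x, #{P ∈ S' ×ˢ S' | x ∈ P.1 ∩ P.2 ∧ f P.1 x ≠ f P.2 x} := by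
        rw [card_univ, Fintype.card_fin]
        gcongr with x
        exact disagreeCount_majFun_sq_le S' f x

end Majority

theorem stmt_4_general (n : ℕ)
    (S' : Finset (Finset (Fin n)))
    (f : Finset (Fin n) → Fin n → Bool) :
    ((∑ S ∈ S', ((S.filter (fun u => majFun S' f u ≠ f S u)).card : ℝ)) / (S'.card : ℝ)) ^ 2
        / (n : ℝ)
      ≤ (∑ P ∈ S' ×ˢ S', (((P.1 ∩ P.2).filter (fun u => f P.1 u ≠ f P.2 u)).card : ℝ))
          / ((S'.card : ℝ)) ^ 2 := by
  have key : ((∑ S ∈ S', #{u ∈ S | majFun S' f u ≠ f S u} : ℕ) : ℝ) ^ 2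
      ≤ n * ((∑ P ∈ S' ×ˢ S', #{u ∈ P.1 ∩ P.2 | f P.1 u ≠ f P.2 u} : ℕ) : ℝ) := by
    exact_mod_cast sq_sum_card_disagr_majFun_le S' f
  push_cast at key
  rw [div_pow, div_div, mul_comm, ← div_div]
  gcongr
  exact div_le_of_le_mul₀ (by positivity) (by positivity) (by linarith)

/-- Key inequality in majority decoding:
`E_{S₁,S₂∈𝓢'}[disagr(f_{S₁},f_{S₂})] ≥ (1/n)·(E_{S∈𝓢'}[disagr(g,f_S)])²`,
where `g` is the pointwise majority of the `f_S` and expectations are over uniform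
independent draws from `𝓢'`. -/
theorem stmt_4 (n : ℕ) (hn : 0 < n)
    (S' : Finset (Finset (Fin n))) (hne : S'.Nonempty)
    (f : Finset (Fin n) → Fin n → Bool) :
    ((∑ S ∈ S', ((S.filter (fun u => majFun S' f u ≠ f S u)).card : ℝ)) / (S'.card : ℝ)) ^ 2
        / (n : ℝ)
      ≤ (∑ P ∈ S' ×ˢ S', (((P.1 ∩ P.2).filter (fun u => f P.1 u ≠ f P.2 u)).card : ℝ))
          / ((S'.card : ℝ)) ^ 2 :=
  stmt_4_general n S' f
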